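/- Let A ∈ ℝ^{m×N}, let T̃ ⊆ {1,…,N}, w ∈ [0,1], and suppose that for every nonzero h with Ah = 0 one has w‖h_T‖₁ + (1−w)‖h_S‖₁ < ‖h_{Tᶜ}‖₁, where T = supp(x) and S = (T̃ ∩ Tᶜ) ∪ (T̃ᶜ ∩ T), for a fixed vector x supported on T. Then x is the unique minimizer of min_z ∑ᵢ wᵢ|zᵢ| subject to Az = Ax, where wᵢ = w on T̃ and wᵢ = 1 on T̃ᶜ. -/
import Mathlib


open Finset

/-- ℓ1 norm of the restriction of `h` to the index set `T`. -/
def l1 {N : ℕ} (h : Fin N → ℝ) (T : Finset (Fin N)) : ℝ := ∑ i ∈ T, |h i|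

/-- The weighted null space property w-NSP(k,s,C). -/
def WNSP {m N : ℕ} (A : Matrix (Fin m) (Fin N) ℝ) (w : ℝ) (k s : ℕ) (C : ℝ) : Prop :=
  ∀ h : Fin N → ℝ, A.mulVec h = 0 →
    ∀ T S : Finset (Fin N), T.card ≤ k → S.card ≤ s →
      w * l1 h T + (1 - w) * l1 h S ≤ C * l1 h Tᶜ

/-- The weighted ℓ1 objective with weight `w` on the support estimate `Ttil`. -/
def wObj {N : ℕ} (w : ℝ) (Ttil : Finset (Fin N)) (z : Fin N → ℝ) : ℝ :=
  w * l1 z Ttil + l1 z Ttilᶜ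

/-- `x` is the unique minimizer of the weighted ℓ1 problem with measurements `A x`. -/
def UniqueMin {m N : ℕ} (A : Matrix (Fin m) (Fin N) ℝ) (w : ℝ) (Ttil : Finset (Fin N))
    (x : Fin N → ℝ) : Prop :=
  ∀ z : Fin N → ℝ, A.mulVec z = A.mulVec x → z ≠ x → wObj w Ttil x < wObj w Ttil z

/-- The support of a vector as a finset. -/
noncomputable def supp {N : ℕ} (x : Fin N → ℝ) : Finset (Fin N) := Finset.univ.filter (fun i => x i ≠ 0)

private lemma l1_split {N : ℕ} (h : Fin N → ℝ) (U V : Finset (Fin N)) :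
    l1 h U = l1 h (V ∩ U) + l1 h (Vᶜ ∩ U) := by
  unfold l1
  rw [inter_comm V U, inter_comm Vᶜ U,
    show U ∩ Vᶜ = U \ V from by ext i; simp [and_comm],
    Finset.sum_inter_add_sum_sdiff]

theorem stmt17 {m N : ℕ} (A : Matrix (Fin m) (Fin N) ℝ) (Ttil : Finset (Fin N))
    (w : ℝ) (hw0 : 0 ≤ w) (hw1 : w ≤ 1) (x : Fin N → ℝ)
    (hA : ∀ h : Fin N → ℝ, A.mulVec h = 0 → h ≠ 0 →
      w * l1 h (supp x) + (1 - w) * l1 h ((Ttil ∩ (supp x)ᶜ) ∪ (Ttilᶜ ∩ supp x)) <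
        l1 h (supp x)ᶜ) :
    UniqueMin A w Ttil x := by
  intro z hAz hzx
  set T := supp x with hTdef
  set h : Fin N → ℝ := z - x with hhdef
  have hhi : ∀ i, h i = z i - x i := fun i => rfl
  have hx0 : ∀ i ∈ Tᶜ, x i = 0 := by
    intro i hi
    have := Finset.mem_compl.mp hi
    simpa [hTdef, supp] using this
  have hAh : A.mulVec h = 0 := by
    rw [hhdef, Matrix.mulVec_sub, hAz, sub_self]
  have hne : h ≠ 0 := by
    rw [hhdef]; exact sub_ne_zero.mpr hzx
  have key := hA h hAh hne
  -- split the null-space inequality into the four pieces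
  have hsplitT : l1 h T = l1 h (Ttil ∩ T) + l1 h (Ttilᶜ ∩ T) := l1_split h T Ttil
  have hsplitTc : l1 h Tᶜ = l1 h (Ttil ∩ Tᶜ) + l1 h (Ttilᶜ ∩ Tᶜ) := l1_split h Tᶜ Ttil
  have hS : l1 h ((Ttil ∩ Tᶜ) ∪ (Ttilᶜ ∩ T)) = l1 h (Ttil ∩ Tᶜ) + l1 h (Ttilᶜ ∩ T) := by
    unfold l1
    apply Finset.sum_union
    rw [Finset.disjoint_left]
    intro i hi hj
    simp only [Finset.mem_inter, Finset.mem_compl] at hi hj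
    exact hj.1 hi.1
  rw [hsplitT, hsplitTc, hS] at key
  -- z equals h on Tᶜ, x is zero on Tᶜ
  have hzc : ∀ U : Finset (Fin N), U ⊆ Tᶜ → l1 z U = l1 h U := by
    intro U hU
    apply Finset.sum_congr rfl
    intro i hi
    rw [hhi i, hx0 i (hU hi), sub_zero]
  have hxc : ∀ U : Finset (Fin N), U ⊆ Tᶜ → l1 x U = 0 := by
    intro U hU
    apply Finset.sum_eq_zero
    intro i hi
    rw [hx0 i (hU hi), abs_zero]
  -- lower bound on l1 z
  have hlb : ∀ U : Finset (Fin N), l1 x U - l1 h U ≤ l1 z U := by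
    intro U
    unfold l1
    rw [← Finset.sum_sub_distrib]
    apply Finset.sum_le_sum
    intro i _
    have h1 := abs_sub_abs_le_abs_sub (x i) (z i)
    have h2 : |x i - z i| = |h i| := by rw [hhi i, abs_sub_comm]
    linarith
  -- split the objectives
  have hoz : wObj w Ttil z = w * (l1 z (Ttil ∩ T) + l1 h (Ttil ∩ Tᶜ))
      + (l1 z (Ttilᶜ ∩ T) + l1 h (Ttilᶜ ∩ Tᶜ)) := by
    unfold wObj
    rw [l1_split z Ttil T, l1_split z Ttilᶜ T,
      inter_comm T Ttil, inter_comm Tᶜ Ttil, inter_comm T Ttilᶜ, inter_comm Tᶜ Ttilᶜ,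
      hzc (Ttil ∩ Tᶜ) Finset.inter_subset_right,
      hzc (Ttilᶜ ∩ Tᶜ) Finset.inter_subset_right]
  have hox : wObj w Ttil x = w * l1 x (Ttil ∩ T) + l1 x (Ttilᶜ ∩ T) := by
    unfold wObj
    rw [l1_split x Ttil T, l1_split x Ttilᶜ T,
      inter_comm T Ttil, inter_comm Tᶜ Ttil, inter_comm T Ttilᶜ, inter_comm Tᶜ Ttilᶜ,
      hxc (Ttil ∩ Tᶜ) Finset.inter_subset_right,
      hxc (Ttilᶜ ∩ Tᶜ) Finset.inter_subset_right]
    ring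
  rw [hoz, hox]
  have h1 := hlb (Ttil ∩ T)
  have h2 := hlb (Ttilᶜ ∩ T)
  nlinarith [mul_le_mul_of_nonneg_left h1 hw0]
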